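/- The function z ↦ 1/(|z|² (-log|z|²)^{3/2}) is not square-integrable with respect to Lebesgue measure on any punctured disc {0 < |z| < r} with 0 < r < 1. -/

import Mathlib

/-!
Since `t (-log t)³ ≤ 27` on `(0, 1]`, the integrand is at least `‖z‖⁻² / 27` on the punctured
disc. In polar coordinates `‖x‖ ^ (-α)` on a ball of `ℝᵈ` becomes `ρ ^ (d - 1 - α)` on `(0, r)`,
so `‖z‖⁻²` is not integrable near the origin of `ℂ ≅ ℝ²`.
-/

open MeasureTheory

open Metric Set in
theorem integrableOn_ball_norm_rpow_neg_iff {E : Type*} [NormedAddCommGroup E] [NormedSpace ℝ E]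
    [FiniteDimensional ℝ E] [Nontrivial E] [MeasurableSpace E] [BorelSpace E]
    (μ : Measure E) [μ.IsAddHaarMeasure] {α r : ℝ} (hr : 0 < r) :
    IntegrableOn (fun x : E => ‖x‖ ^ (-α)) (ball 0 r) μ ↔ α < Module.finrank ℝ E := by
  have hpow : EqOn (fun y : ℝ => y ^ (Module.finrank ℝ E - 1) • y ^ (-α))
      (fun y => y ^ ((Module.finrank ℝ E : ℝ) - 1 - α)) (Ioo 0 r) := by
    intro y hy
    dsimp only
    rw [smul_eq_mul, ← Real.rpow_natCast, ← Real.rpow_add hy.1, Nat.cast_sub Module.finrank_pos,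
      Nat.cast_one, ← sub_eq_add_neg]
  rw [integrableOn_fun_norm_addHaar μ (f := fun y => y ^ (-α)),
    integrableOn_congr_fun hpow measurableSet_Ioo, intervalIntegral.integrableOn_Ioo_rpow_iff hr]
  constructor <;> intro h <;> linarith

theorem Real.mul_neg_log_pow_three_le {t : ℝ} (ht₀ : 0 < t) (ht₁ : t ≤ 1) :
    t * (-Real.log t) ^ 3 ≤ 27 := by
  have h := Real.abs_log_mul_self_rpow_lt t (1 / 3) ht₀ ht₁ (by norm_num)
  have hcube : (t ^ (1 / 3 : ℝ)) ^ 3 = t := by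
    rw [← Real.rpow_natCast, ← Real.rpow_mul ht₀.le]; norm_num
  have hL : 0 ≤ -Real.log t := neg_nonneg.2 (Real.log_nonpos ht₀.le ht₁)
  calc t * (-Real.log t) ^ 3 ≤ |Real.log t * t ^ (1 / 3 : ℝ)| ^ 3 := by
        rw [abs_mul, abs_of_pos (Real.rpow_pos_of_pos ht₀ _), mul_pow, hcube, mul_comm]
        gcongr
        exact neg_le_abs _
    _ ≤ 3 ^ 3 := by gcongr; simpa using h.le
    _ = 27 := by norm_num

theorem Real.inv_le_mul_inv_mul_neg_log_rpow_sq {t : ℝ} (ht₀ : 0 < t) (ht₁ : t < 1) :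
    t⁻¹ ≤ 27 * ((t * (-Real.log t) ^ ((3 : ℝ) / 2))⁻¹) ^ 2 := by
  have hL : 0 < -Real.log t := neg_pos.2 (Real.log_neg ht₀ ht₁)
  have hsq : ((-Real.log t) ^ ((3 : ℝ) / 2)) ^ 2 = (-Real.log t) ^ 3 := by
    rw [← Real.rpow_natCast, ← Real.rpow_mul hL.le]; norm_num
  rw [inv_pow, mul_pow, hsq, ← div_eq_mul_inv, le_div_iff₀ (by positivity)]
  calc t⁻¹ * (t ^ 2 * (-Real.log t) ^ 3) = t * (-Real.log t) ^ 3 := by field_simp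
    _ ≤ 27 := Real.mul_neg_log_pow_three_le ht₀ ht₁.le

open Metric in
/-- The function `z ↦ 1/(|z|² (-log|z|²)^{3/2})` is not square-integrable (with respect
to Lebesgue measure on `ℂ`) on any punctured disc `{0 < |z| < r}` with `0 < r < 1`. -/
theorem stmt_3 :
    ∀ r : ℝ, 0 < r → r < 1 →
      ¬ IntegrableOn
          (fun z : ℂ =>
            ((‖z‖ ^ 2 * (-Real.log (‖z‖ ^ 2)) ^ ((3 : ℝ) / 2))⁻¹) ^ 2)
          {z : ℂ | 0 < ‖z‖ ∧ ‖z‖ < r} volume := by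
  intro r hr hr₁ hf
  have hpunct : {z : ℂ | 0 < ‖z‖ ∧ ‖z‖ < r} = ball 0 r \ {0} := by
    ext z; simp [norm_pos_iff, and_comm]
  rw [hpunct] at hf
  have hbound : ∀ z ∈ ball (0 : ℂ) r \ {0}, ‖‖z‖ ^ (-(2 : ℝ))‖ ≤
      27 * ((‖z‖ ^ 2 * (-Real.log (‖z‖ ^ 2)) ^ ((3 : ℝ) / 2))⁻¹) ^ 2 := by
    rintro z ⟨hzr, hz₀⟩
    rw [mem_ball_zero_iff] at hzr
    have hz : 0 < ‖z‖ := norm_pos_iff.2 hz₀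
    rw [Real.norm_of_nonneg (by positivity), Real.rpow_neg hz.le, Real.rpow_two]
    exact Real.inv_le_mul_inv_mul_neg_log_rpow_sq (by positivity) (by nlinarith)
  have hball : IntegrableOn (fun z : ℂ => ‖z‖ ^ (-(2 : ℝ))) (ball 0 r) :=
    IntegrableOn.congr_set_ae
      (Integrable.mono' (hf.const_mul 27) (measurable_norm.pow_const _).aestronglyMeasurable
        (ae_restrict_of_forall_mem (measurableSet_ball.diff (measurableSet_singleton 0)) hbound))
      (sdiff_null_ae_eq_self (measure_singleton 0)).symm
  have h := (integrableOn_ball_norm_rpow_neg_iff volume hr).1 hball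
  simp at h
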